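/- arXiv:2303.17988 — 4 statements merged into one kernel-verified Lean document; each statement's English description precedes it below -/
import Mathlib

section
/- Let g be continuous at t with g(t) > 0, and let K be a bounded kernel supported on [-1,1] with ∫K = 1. If X₁, X₂, ... are i.i.d. with density g on [0,1], t ∈ (0,1), and h_n → 0 with n h_n → ∞, then n⁻¹ Σ_{i=1}^n K_{h_n}(t - X_i) → g(t) in probability. -/
/-!
Write `φ_b(x) = b⁻¹ K((t - x)/b)` (`scaledKernel K b t x`) and `|K| ≤ M`. The estimator is the
empirical mean of the i.i.d. bounded variables `φ_{hₙ}(Xᵢ)`, so by Chebyshev it deviates from its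
mean `E φ_{hₙ}(X)` by at least `ε/2` with probability at most `4 E[φ_{hₙ}(X)²] / (n ε²)`. Since
`|φ_b| ≤ M / b` and `∫ |φ_b| = ∫ |K|`, this is `O(1 / (n hₙ))`. The bias
`E φ_b(X) - g(t) = ∫ (w(x) - g(t)) φ_b(x) dx`, with `w` the density of the law of `X`, only sees
`w` on `[t - b, t + b]`, where continuity of `g` at `t` keeps it uniformly close to `g(t)`.

`g` is not assumed measurable, so `w` is taken to be the Radon–Nikodym derivative of the law with
respect to Lebesgue measure; it inherits every pointwise bound of `g` on a measurable set almost
everywhere.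
-/

open MeasureTheory ProbabilityTheory Set Filter Finset Metric
open scoped ENNReal

section Chebyshev

variable {Ω : Type*} [MeasurableSpace Ω] {μ : Measure Ω} [IsProbabilityMeasure μ]

theorem measure_abs_average_sub_ge_le {Y : ℕ → Ω → ℝ} (hY : ∀ i, MemLp (Y i) 2 μ)
    (hindep : Pairwise fun i j => IndepFun (Y i) (Y j) μ) {m v : ℝ}
    (hm : ∀ i, μ[Y i] = m) (hv : ∀ i, variance (Y i) μ ≤ v) {n : ℕ} (hn : 0 < n)
    {ε : ℝ} (hε : 0 < ε) :
    μ {ω | ε ≤ |(n : ℝ)⁻¹ * ∑ i ∈ range n, Y i ω - m|} ≤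
      ENNReal.ofReal (v / ((n : ℝ) * ε ^ 2)) := by
  set Z := (n : ℝ)⁻¹ • ∑ i ∈ range n, Y i
  have hZ : ∀ ω, Z ω = (n : ℝ)⁻¹ * ∑ i ∈ range n, Y i ω := fun ω => by
    simp [Z, Finset.sum_apply]
  have hZmean : μ[Z] = m := by
    simp_rw [hZ]
    rw [integral_const_mul, integral_finsetSum _ fun i _ => (hY i).integrable one_le_two]
    simp [hm, hn.ne']
  have hZvar : variance Z μ ≤ v / n := by
    rw [variance_smul, IndepFun.variance_sum (fun i _ => hY i) fun i _ j _ hij => hindep hij]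
    calc (n : ℝ)⁻¹ ^ 2 * ∑ i ∈ range n, variance (Y i) μ ≤ (n : ℝ)⁻¹ ^ 2 * (n * v) := by
          gcongr
          exact (Finset.sum_le_sum fun i _ => hv i).trans_eq
            (by rw [sum_const, card_range, nsmul_eq_mul])
      _ = v / n := by field_simp
  calc μ {ω | ε ≤ |(n : ℝ)⁻¹ * ∑ i ∈ range n, Y i ω - m|} = μ {ω | ε ≤ |Z ω - μ[Z]|} := by
        rw [hZmean]; simp_rw [hZ]
    _ ≤ ENNReal.ofReal (variance Z μ / ε ^ 2) :=
        meas_ge_le_variance_div_sq ((memLp_finsetSum' _ fun i _ => hY i).const_smul _) hε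
    _ ≤ ENNReal.ofReal (v / ((n : ℝ) * ε ^ 2)) := by
        rw [← div_div]
        exact ENNReal.ofReal_le_ofReal (by gcongr)

theorem measure_abs_average_comp_sub_ge_le {X : ℕ → Ω → ℝ} (hX : ∀ i, Measurable (X i))
    (hindep : iIndepFun X μ) {ν : Measure ℝ} (hXν : ∀ i, μ.map (X i) = ν) {φ : ℝ → ℝ}
    (hφ : Measurable φ) (hφ2 : MemLp φ 2 ν) {n : ℕ} (hn : 0 < n) {c ε : ℝ} (hε : 0 < ε)
    (hmean : |∫ x, φ x ∂ν - c| ≤ ε / 2) :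
    μ {ω | ε ≤ |(n : ℝ)⁻¹ * ∑ i ∈ range n, φ (X i ω) - c|} ≤
      ENNReal.ofReal (4 * (∫ x, φ x ^ 2 ∂ν) / ((n : ℝ) * ε ^ 2)) := by
  have hY : ∀ i, MemLp (φ ∘ X i) 2 μ := fun i => (hXν i ▸ hφ2).comp_of_map (hX i).aemeasurable
  have hmoment : ∀ (f : ℝ → ℝ) (i : ℕ), Measurable f → ∫ ω, f (X i ω) ∂μ = ∫ x, f x ∂ν :=
    fun f i hf => by rw [← hXν i, integral_map (hX i).aemeasurable hf.aestronglyMeasurable]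
  have hvar : ∀ i, variance (φ ∘ X i) μ ≤ ∫ x, φ x ^ 2 ∂ν := fun i =>
    (variance_le_expectation_sq (hY i).1).trans_eq (hmoment (φ ^ 2) i (hφ.pow_const 2))
  calc μ {ω | ε ≤ |(n : ℝ)⁻¹ * ∑ i ∈ range n, φ (X i ω) - c|}
      ≤ μ {ω | ε / 2 ≤ |(n : ℝ)⁻¹ * ∑ i ∈ range n, (φ ∘ X i) ω - ∫ x, φ x ∂ν|} := by
        refine measure_mono fun ω (hω : ε ≤ _) => ?_
        have := abs_sub_le ((n : ℝ)⁻¹ * ∑ i ∈ range n, φ (X i ω)) (∫ x, φ x ∂ν) c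
        simp only [mem_ofPred_eq, Function.comp_apply]
        linarith
    _ ≤ ENNReal.ofReal ((∫ x, φ x ^ 2 ∂ν) / ((n : ℝ) * (ε / 2) ^ 2)) :=
        measure_abs_average_sub_ge_le hY
          (fun i j hij => (hindep.comp _ fun _ => hφ).indepFun hij)
          (fun i => hmoment φ i hφ) hvar hn (half_pos hε)
    _ = ENNReal.ofReal (4 * (∫ x, φ x ^ 2 ∂ν) / ((n : ℝ) * ε ^ 2)) := by
        congr 1
        field_simp
        ring

end Chebyshev

theorem integral_comp_sub_div {E : Type*} [NormedAddCommGroup E] [NormedSpace ℝ E]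
    (f : ℝ → E) (t b : ℝ) : ∫ x, f ((t - x) / b) = |b| • ∫ u, f u := by
  rw [integral_sub_left_eq_self (fun y => f (y / b)) volume t, Measure.integral_comp_div]

noncomputable def scaledKernel (K : ℝ → ℝ) (b t x : ℝ) : ℝ := 1 / b * K ((t - x) / b)

section ScaledKernel

variable {K : ℝ → ℝ} {b t M : ℝ}

theorem scaledKernel_eq_zero (hK : ∀ u ∉ Icc (-1 : ℝ) 1, K u = 0) (hb : 0 < b) {x : ℝ}
    (hx : x ∉ closedBall t b) : scaledKernel K b t x = 0 := by
  rw [mem_closedBall, Real.dist_eq, not_le] at hx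
  rw [scaledKernel, hK, mul_zero]
  rw [Set.mem_Icc, ← abs_le, abs_div, abs_of_pos hb, div_le_one hb, abs_sub_comm]
  exact hx.not_ge

theorem abs_scaledKernel_le (hK : ∀ u, |K u| ≤ M) (hb : 0 < b) (x : ℝ) :
    |scaledKernel K b t x| ≤ M / b := by
  rw [scaledKernel, abs_mul, abs_of_pos (one_div_pos.2 hb), one_div_mul_eq_div]
  gcongr
  exact hK _

theorem measurable_scaledKernel (hK : Measurable K) : Measurable (scaledKernel K b t) := by
  unfold scaledKernel
  fun_prop

theorem MeasureTheory.Integrable.scaledKernel (hK : Integrable K) :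
    Integrable (scaledKernel K b t) := by
  rcases eq_or_ne b 0 with rfl | hb
  · exact (integrable_zero ℝ ℝ volume).congr (ae_of_all _ fun x => by simp [scaledKernel])
  · exact ((hK.comp_div hb).comp_sub_left t).const_mul _

theorem integral_scaledKernel (hb : 0 < b) : ∫ x, scaledKernel K b t x = ∫ u, K u := by
  simp only [scaledKernel]
  rw [integral_const_mul, integral_comp_sub_div, abs_of_pos hb, smul_eq_mul, ← mul_assoc,
    one_div_mul_cancel hb.ne', one_mul]

theorem integral_abs_scaledKernel (hb : 0 < b) :
    ∫ x, |scaledKernel K b t x| = ∫ u, |K u| := by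
  simp only [scaledKernel, abs_mul, abs_of_pos (one_div_pos.2 hb)]
  rw [integral_const_mul, integral_comp_sub_div (fun u => |K u|), abs_of_pos hb, smul_eq_mul,
    ← mul_assoc, one_div_mul_cancel hb.ne', one_mul]

theorem integrable_sq_scaledKernel (hKint : Integrable K) (hK : ∀ u, |K u| ≤ M) (hb : 0 < b) :
    Integrable fun x => scaledKernel K b t x ^ 2 := by
  simpa only [sq] using hKint.scaledKernel.bdd_mul hKint.scaledKernel.1
    (ae_of_all _ fun x => abs_scaledKernel_le hK hb x)

theorem integral_sq_scaledKernel_le (hKint : Integrable K) (hK : ∀ u, |K u| ≤ M) (hb : 0 < b) :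
    ∫ x, scaledKernel K b t x ^ 2 ≤ M / b * ∫ u, |K u| := by
  rw [← integral_abs_scaledKernel (t := t) hb, ← integral_const_mul]
  refine integral_mono_of_nonneg (ae_of_all _ fun _ => sq_nonneg _)
    (hKint.scaledKernel.abs.const_mul _) (ae_of_all _ fun x => ?_)
  dsimp only
  rw [sq, ← abs_mul_abs_self]
  exact mul_le_mul_of_nonneg_right (abs_scaledKernel_le hK hb x) (abs_nonneg _)

end ScaledKernel

theorem abs_integral_mul_sub_const_mul_le {α : Type*} [MeasurableSpace α] {μ : Measure α}
    {w F : α → ℝ} {s : Set α} {c δ : ℝ} (hw : AEStronglyMeasurable w μ) (hF : Integrable F μ)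
    (hFs : ∀ x ∉ s, F x = 0) (hws : ∀ᵐ x ∂μ, x ∈ s → w x ∈ Icc (c - δ) (c + δ)) :
    |∫ x, w x * F x ∂μ - c * ∫ x, F x ∂μ| ≤ δ * ∫ x, |F x| ∂μ := by
  have hbound : ∀ᵐ x ∂μ, ‖(w x - c) * F x‖ ≤ δ * |F x| := by
    filter_upwards [hws] with x hx
    by_cases hxs : x ∈ s
    · rw [Real.norm_eq_abs, abs_mul, abs_sub_comm]
      exact mul_le_mul_of_nonneg_right (mem_Icc_iff_abs_le.2 (hx hxs)) (abs_nonneg _)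
    · simp [hFs x hxs]
  have hint : Integrable (fun x => (w x - c) * F x) μ :=
    (hF.abs.const_mul δ).mono' ((hw.sub aestronglyMeasurable_const).mul hF.1) hbound
  have hsplit : ∫ x, w x * F x ∂μ = ∫ x, (w x - c) * F x ∂μ + c * ∫ x, F x ∂μ := by
    rw [← integral_const_mul, ← integral_add hint (hF.const_mul c)]
    congr 1 with x
    ring
  rw [hsplit, add_sub_cancel_right, ← integral_const_mul]
  exact norm_integral_le_of_norm_le (hF.abs.const_mul δ) hbound

theorem ae_toReal_rnDeriv_withDensity_ofReal_mem_Icc {α : Type*} [MeasurableSpace α]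
    {μ : Measure α} [SigmaFinite μ] {g : α → ℝ}
    [SigmaFinite (μ.withDensity fun x => ENNReal.ofReal (g x))] {s : Set α}
    (hs : MeasurableSet s) {a b : ℝ} (hb : 0 ≤ b) (hg : ∀ x ∈ s, g x ∈ Icc a b) :
    ∀ᵐ x ∂μ, x ∈ s →
      ((μ.withDensity fun x => ENNReal.ofReal (g x)).rnDeriv μ x).toReal ∈ Icc a b := by
  set ν := μ.withDensity fun x => ENNReal.ofReal (g x)
  have hν : ν ≪ μ := withDensity_absolutelyContinuous _ _
  have hset : ∀ A, MeasurableSet A →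
      ∫⁻ x in A ∩ s, ν.rnDeriv μ x ∂μ = ∫⁻ x in A ∩ s, ENNReal.ofReal (g x) ∂μ := fun A hA => by
    rw [Measure.setLIntegral_rnDeriv' hν (hA.inter hs), withDensity_apply _ (hA.inter hs)]
  have hup : ν.rnDeriv μ ≤ᵐ[μ.restrict s] fun _ => ENNReal.ofReal b := by
    refine ae_le_of_forall_setLIntegral_le_of_sigmaFinite (Measure.measurable_rnDeriv _ _)
      fun A hA _ => ?_
    rw [Measure.restrict_restrict hA, hset A hA]
    exact setLIntegral_mono' (hA.inter hs) fun x hx => ENNReal.ofReal_le_ofReal (hg x hx.2).2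
  have hlow : (fun _ => ENNReal.ofReal a) ≤ᵐ[μ.restrict s] ν.rnDeriv μ := by
    refine ae_le_of_forall_setLIntegral_le_of_sigmaFinite measurable_const fun A hA _ => ?_
    rw [Measure.restrict_restrict hA, hset A hA]
    exact setLIntegral_mono' (hA.inter hs) fun x hx => ENNReal.ofReal_le_ofReal (hg x hx.2).1
  filter_upwards [(ae_restrict_iff' hs).1 (hlow.and hup), ν.rnDeriv_lt_top μ] with x hx hfin hxs
  exact ⟨(ENNReal.ofReal_le_iff_le_toReal hfin.ne).1 (hx hxs).1,
    ENNReal.toReal_le_of_le_ofReal hb (hx hxs).2⟩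

theorem measure_abs_average_scaledKernel_sub_ge_le
    {Ω : Type*} [MeasurableSpace Ω] {μ : Measure Ω} [IsProbabilityMeasure μ]
    {X : ℕ → Ω → ℝ} (hX : ∀ i, Measurable (X i)) (hindep : iIndepFun X μ)
    {ν : Measure ℝ} [IsFiniteMeasure ν] (hν : ν ≪ volume) (hXν : ∀ i, μ.map (X i) = ν)
    {K : ℝ → ℝ} {M : ℝ} (hKmeas : Measurable K) (hKint : Integrable K) (hK : ∀ u, |K u| ≤ M)
    (hKsupp : ∀ u ∉ Icc (-1 : ℝ) 1, K u = 0) (hK1 : ∫ u, K u = 1)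
    {t b c δ ε : ℝ} (hb : 0 < b) (hε : 0 < ε) (hcδ : 0 ≤ c + δ) (hδ : δ * ∫ u, |K u| ≤ ε / 2)
    (hw : ∀ᵐ x, x ∈ closedBall t b → (ν.rnDeriv volume x).toReal ∈ Icc (c - δ) (c + δ))
    {n : ℕ} (hn : 0 < n) :
    (μ {ω | ε ≤ |(n : ℝ)⁻¹ * ∑ i ∈ range n, scaledKernel K b t (X i ω) - c|}).toReal ≤
      4 * ((c + δ) * (M * ∫ u, |K u|)) / ε ^ 2 / (n * b) := by
  set φ := scaledKernel K b t
  have hsupp : ∀ x ∉ closedBall t b, φ x = 0 := fun x => scaledKernel_eq_zero hKsupp hb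
  have hwm : AEStronglyMeasurable (fun x => (ν.rnDeriv volume x).toReal) volume :=
    (ν.measurable_rnDeriv volume).ennreal_toReal.aestronglyMeasurable
  have hmean : |∫ x, φ x ∂ν - c| ≤ ε / 2 := by
    rw [← integral_toReal_rnDeriv_mul hν]
    have h := abs_integral_mul_sub_const_mul_le hwm hKint.scaledKernel hsupp hw
    rw [integral_scaledKernel hb, hK1, mul_one, integral_abs_scaledKernel hb] at h
    exact h.trans hδ
  have hsq : ∫ x, φ x ^ 2 ∂ν ≤ (c + δ) * (M / b * ∫ u, |K u|) := by
    rw [← integral_toReal_rnDeriv_mul hν]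
    have h := abs_integral_mul_sub_const_mul_le (F := fun x => φ x ^ 2) hwm
      (integrable_sq_scaledKernel hKint hK hb) (fun x hx => by simp [hsupp x hx]) hw
    simp only [abs_sq] at h
    calc ∫ x, (ν.rnDeriv volume x).toReal * φ x ^ 2
        ≤ (c + δ) * ∫ x, φ x ^ 2 := by linarith [(abs_le.1 h).2]
      _ ≤ (c + δ) * (M / b * ∫ u, |K u|) := by
          gcongr
          exact integral_sq_scaledKernel_le hKint hK hb
  have hL2 : MemLp φ 2 ν := MemLp.of_bound (measurable_scaledKernel hKmeas).aestronglyMeasurable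
    (M / b) (ae_of_all _ fun x => abs_scaledKernel_le hK hb x)
  have hM : 0 ≤ M := (abs_nonneg _).trans (hK 0)
  refine ENNReal.toReal_le_of_le_ofReal (by positivity) ?_
  refine (measure_abs_average_comp_sub_ge_le hX hindep hXν (measurable_scaledKernel hKmeas) hL2
    hn hε hmean).trans (ENNReal.ofReal_le_ofReal ?_)
  calc 4 * (∫ x, φ x ^ 2 ∂ν) / (n * ε ^ 2)
      ≤ 4 * ((c + δ) * (M / b * ∫ u, |K u|)) / (n * ε ^ 2) := by gcongr
    _ = 4 * ((c + δ) * (M * ∫ u, |K u|)) / ε ^ 2 / (n * b) := by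
        field_simp

theorem kernel_density_consistency_general
    {Ω : Type*} [MeasurableSpace Ω] (μ : Measure Ω) [IsProbabilityMeasure μ]
    (X : ℕ → Ω → ℝ) (hXmeas : ∀ i, Measurable (X i))
    (hXindep : iIndepFun X μ)
    (g : ℝ → ℝ)
    (hXdist : ∀ i, μ.map (X i) = volume.withDensity (fun x => ENNReal.ofReal (g x)))
    (t : ℝ) (hgt : 0 < g t) (hgc : ContinuousAt g t)
    (K : ℝ → ℝ) (hKbdd : ∃ M, ∀ u, |K u| ≤ M)
    (hKmeas : Measurable K)
    (hKsupp : ∀ u, u ∉ Icc (-1 : ℝ) 1 → K u = 0) (hK1 : ∫ u, K u = 1)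
    (h : ℕ → ℝ) (hhpos : ∀ n, 0 < h n)
    (hh0 : Tendsto h atTop (nhds 0))
    (hnh : Tendsto (fun n : ℕ => (n : ℝ) * h n) atTop atTop) :
    ∀ ε > 0,
      Tendsto
        (fun n : ℕ =>
          (μ {ω | ε ≤ |(n : ℝ)⁻¹ * ∑ i ∈ Finset.range n,
              (1 / h n) * K ((t - X i ω) / h n) - g t|}).toReal)
        atTop (nhds 0) := by
  intro ε hε
  obtain ⟨M, hM⟩ := hKbdd
  have hKint : Integrable K := Integrable.of_integral_ne_zero (by rw [hK1]; exact one_ne_zero)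
  set ν := volume.withDensity fun x => ENNReal.ofReal (g x)
  have : IsProbabilityMeasure ν :=
    hXdist 0 ▸ Measure.isProbabilityMeasure_map (hXmeas 0).aemeasurable
  set I := ∫ u, |K u|
  have hI : 0 ≤ I := integral_nonneg fun _ => abs_nonneg _
  set δ := ε / 2 / (I + 1)
  have hδ : 0 < δ := by positivity
  have hδI : δ * I ≤ ε / 2 := by
    rw [div_mul_eq_mul_div, div_le_iff₀ (by positivity)]
    nlinarith
  obtain ⟨r, hr, hgr⟩ : ∃ r > 0, ∀ x ∈ ball t r, g x ∈ Icc (g t - δ) (g t + δ) :=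
    eventually_nhds_iff_ball.1 (hgc.eventually (Icc_mem_nhds (by linarith) (by linarith)))
  have hw := ae_toReal_rnDeriv_withDensity_ofReal_mem_Icc (μ := volume) measurableSet_ball
    (by linarith) hgr
  refine tendsto_of_tendsto_of_tendsto_of_le_of_le' tendsto_const_nhds
    ((tendsto_const_nhds (x := 4 * ((g t + δ) * (M * I)) / ε ^ 2)).div_atTop hnh)
    (Eventually.of_forall fun _ => ENNReal.toReal_nonneg) ?_
  filter_upwards [eventually_gt_atTop 0, hh0.eventually_lt_const hr] with n hn hhr
  exact measure_abs_average_scaledKernel_sub_ge_le hXmeas hXindep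
    (withDensity_absolutelyContinuous _ _) hXdist hKmeas hKint hM hKsupp hK1 (hhpos n) hε
    (by linarith) hδI (hw.mono fun x hx hxb => hx (closedBall_subset_ball hhr hxb)) hn

/-- If `X₁, X₂, ...` are i.i.d. with density `g` on `[0,1]`, `g` is continuous
at `t ∈ (0,1)` with `g(t) > 0`, `K` is a bounded kernel supported on `[-1,1]` with
`∫ K = 1`, and `hₙ → 0` with `n hₙ → ∞`, then
`n⁻¹ Σ_{i<n} K_{hₙ}(t - Xᵢ) → g(t)` in probability. -/
theorem kernel_density_consistency
    {Ω : Type*} [MeasurableSpace Ω] (μ : Measure Ω) [IsProbabilityMeasure μ]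
    (X : ℕ → Ω → ℝ) (hXmeas : ∀ i, Measurable (X i))
    (hXindep : iIndepFun X μ)
    (g : ℝ → ℝ) (hgpos : ∀ x, 0 ≤ g x) (hgsupp : ∀ x, x ∉ Icc (0 : ℝ) 1 → g x = 0)
    (hXdist : ∀ i, μ.map (X i) = volume.withDensity (fun x => ENNReal.ofReal (g x)))
    (t : ℝ) (ht : t ∈ Ioo (0 : ℝ) 1) (hgt : 0 < g t) (hgc : ContinuousAt g t)
    (K : ℝ → ℝ) (hKbdd : ∃ M, ∀ u, |K u| ≤ M)
    (hKmeas : Measurable K)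
    (hKsupp : ∀ u, u ∉ Icc (-1 : ℝ) 1 → K u = 0) (hK1 : ∫ u, K u = 1)
    (h : ℕ → ℝ) (hhpos : ∀ n, 0 < h n)
    (hh0 : Tendsto h atTop (nhds 0))
    (hnh : Tendsto (fun n : ℕ => (n : ℝ) * h n) atTop atTop) :
    ∀ ε > 0,
      Tendsto
        (fun n : ℕ =>
          (μ {ω | ε ≤ |(n : ℝ)⁻¹ * ∑ i ∈ Finset.range n,
              (1 / h n) * K ((t - X i ω) / h n) - g t|}).toReal)
        atTop (nhds 0) :=
  kernel_density_consistency_general μ X hXmeas hXindep g hXdist t hgt hgc K hKbdd hKmeas hKsupp hK1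
    h hhpos hh0 hnh
end

section
/- Under the same setup, (h_n/n) Σ_{i=1}^n K_{h_n}(t - X_i)² → g(t) ∫ K(u)² du in probability. -/
/-!
Write `Tₙ = (n hₙ)⁻¹ ∑_{i<n} K((t - Xᵢ)/hₙ)²`. Its mean is `hₙ⁻¹ ∫ K((t - x)/hₙ)² g(x) dx`, which
tends to `g(t) ∫ K²` because the rescaled kernel lives on `[t - hₙ, t + hₙ]`, where `g` is close to
`g(t)`. By independence its variance is at most `(n hₙ)⁻¹ · hₙ⁻¹ ∫ K((t - x)/hₙ)⁴ g(x) dx`; the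
second factor tends to `g(t) ∫ K⁴` for the same reason and `n hₙ → ∞`, so Chebyshev's inequality
concludes.
-/

open MeasureTheory ProbabilityTheory Set Filter Finset Topology
open scoped ENNReal

section WithDensity

variable {α : Type*} [MeasurableSpace α] {μ : Measure α} {f : α → ℝ≥0∞} {s : Set α}

/- `f` need not be measurable, so integrals against `μ.withDensity f` are bounded by comparing
measures on `s` instead of being computed with `integral_withDensity_eq_integral_smul`. -/

theorem restrict_withDensity_le_smul (hs : MeasurableSet s) {c : ℝ≥0∞} (hf : ∀ x ∈ s, f x ≤ c) :
    (μ.withDensity f).restrict s ≤ c • μ.restrict s := by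
  rw [restrict_withDensity hs, ← withDensity_const]
  exact withDensity_mono ((ae_restrict_mem hs).mono hf)

theorem smul_le_restrict_withDensity (hs : MeasurableSet s) {c : ℝ≥0∞} (hf : ∀ x ∈ s, c ≤ f x) :
    c • μ.restrict s ≤ (μ.withDensity f).restrict s := by
  rw [restrict_withDensity hs, ← withDensity_const]
  exact withDensity_mono ((ae_restrict_mem hs).mono hf)

variable {φ : α → ℝ}

theorem integral_withDensity_le_mul_integral (hs : MeasurableSet s) {c : ℝ} (hc : 0 ≤ c)
    (hf : ∀ x ∈ s, f x ≤ ENNReal.ofReal c) (hφ0 : 0 ≤ φ) (hφs : ∀ x ∉ s, φ x = 0)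
    (hφ : Integrable φ μ) :
    ∫ x, φ x ∂μ.withDensity f ≤ c * ∫ x, φ x ∂μ := by
  calc ∫ x, φ x ∂μ.withDensity f = ∫ x in s, φ x ∂μ.withDensity f :=
        (setIntegral_eq_integral_of_forall_compl_eq_zero hφs).symm
    _ ≤ ∫ x, φ x ∂(ENNReal.ofReal c • μ.restrict s) :=
        integral_mono_measure (restrict_withDensity_le_smul hs hf) (ae_of_all _ hφ0)
          (hφ.restrict.smul_measure ENNReal.ofReal_ne_top)
    _ = c * ∫ x, φ x ∂μ := by
        rw [integral_smul_measure, ENNReal.toReal_ofReal hc, smul_eq_mul,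
          setIntegral_eq_integral_of_forall_compl_eq_zero hφs]

theorem mul_integral_le_integral_withDensity (hs : MeasurableSet s) {c : ℝ}
    (hf : ∀ x ∈ s, ENNReal.ofReal c ≤ f x) (hφ0 : 0 ≤ φ) (hφs : ∀ x ∉ s, φ x = 0)
    (hφ : Integrable φ (μ.withDensity f)) :
    c * ∫ x, φ x ∂μ ≤ ∫ x, φ x ∂μ.withDensity f := by
  rcases lt_or_ge c 0 with hc | hc
  · exact (mul_nonpos_of_nonpos_of_nonneg hc.le (integral_nonneg hφ0)).trans
      (integral_nonneg hφ0)
  calc c * ∫ x, φ x ∂μ = ∫ x, φ x ∂(ENNReal.ofReal c • μ.restrict s) := by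
        rw [integral_smul_measure, ENNReal.toReal_ofReal hc, smul_eq_mul,
          setIntegral_eq_integral_of_forall_compl_eq_zero hφs]
    _ ≤ ∫ x in s, φ x ∂μ.withDensity f :=
        integral_mono_measure (smul_le_restrict_withDensity hs hf) (ae_of_all _ hφ0)
          hφ.restrict
    _ = ∫ x, φ x ∂μ.withDensity f := setIntegral_eq_integral_of_forall_compl_eq_zero hφs

theorem abs_integral_withDensity_sub_mul_integral_le {g : α → ℝ} (hs : MeasurableSet s)
    {c η : ℝ} (hcη : 0 ≤ c + η) (hgs : ∀ x ∈ s, |g x - c| ≤ η) (hφ0 : 0 ≤ φ)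
    (hφs : ∀ x ∉ s, φ x = 0) (hφ : Integrable φ μ)
    (hφ' : Integrable φ (μ.withDensity fun x => ENNReal.ofReal (g x))) :
    |∫ x, φ x ∂μ.withDensity (fun x => ENNReal.ofReal (g x)) - c * ∫ x, φ x ∂μ|
      ≤ η * ∫ x, φ x ∂μ := by
  have upper := integral_withDensity_le_mul_integral (f := fun x => ENNReal.ofReal (g x)) hs hcη
    (fun x hx => ENNReal.ofReal_le_ofReal (by linarith [(abs_le.mp (hgs x hx)).2])) hφ0 hφs hφ
  have lower := mul_integral_le_integral_withDensity (c := c - η) hs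
    (fun x hx => ENNReal.ofReal_le_ofReal (by linarith [(abs_le.mp (hgs x hx)).1])) hφ0 hφs hφ'
  rw [abs_le]
  constructor <;> linarith

end WithDensity

theorem integral_comp_sub_div_s8 (F : ℝ → ℝ) (t h : ℝ) :
    ∫ x, F ((t - x) / h) = |h| * ∫ u, F u := by
  rw [integral_sub_left_eq_self (fun y => F (y / h)) volume t, Measure.integral_comp_div,
    smul_eq_mul]

theorem integrable_of_bound_of_forall_notMem_Icc_eq_zero {F : ℝ → ℝ} (hFm : Measurable F)
    {M : ℝ} (hFM : ∀ u, |F u| ≤ M) {a b : ℝ} (hFs : ∀ u ∉ Icc a b, F u = 0) :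
    Integrable F :=
  (Measure.integrableOn_of_bounded measure_Icc_lt_top.ne hFm.aestronglyMeasurable
    (M := M) (ae_of_all _ hFM)).integrable_of_forall_notMem_eq_zero hFs

theorem tendsto_integral_comp_sub_div_withDensity {g : ℝ → ℝ} (hg : ∀ x, 0 ≤ g x)
    [IsFiniteMeasure (volume.withDensity fun x => ENNReal.ofReal (g x))] {t : ℝ}
    (hgt : ContinuousAt g t) {F : ℝ → ℝ} (hFm : Measurable F) (hF0 : 0 ≤ F)
    (hFs : ∀ u ∉ Icc (-1 : ℝ) 1, F u = 0) {M : ℝ} (hFM : ∀ u, |F u| ≤ M) :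
    Tendsto (fun h => (∫ x, F ((t - x) / h) ∂volume.withDensity fun x => ENNReal.ofReal (g x)) / h)
      (𝓝[>] 0) (𝓝 (g t * ∫ u, F u)) := by
  set I := ∫ u, F u
  have hI : 0 ≤ I := integral_nonneg hF0
  rw [Metric.tendsto_nhds]
  intro ε hε
  obtain ⟨δ, hδ, hgδ⟩ := Metric.continuousAt_iff.mp hgt (ε / (I + 1)) (by positivity)
  filter_upwards [Ioo_mem_nhdsGT hδ] with h ⟨hh, hhδ⟩
  have hsupp : ∀ x ∉ Metric.ball t δ, F ((t - x) / h) = 0 := fun x hx => hFs _ fun hu => hx <| by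
    have : |t - x| ≤ h := by simpa [abs_div, abs_of_pos hh, div_le_one hh] using abs_le.mpr hu
    rw [Metric.mem_ball, Real.dist_eq, abs_sub_comm]
    linarith
  have key := abs_integral_withDensity_sub_mul_integral_le (μ := volume)
    Metric.isOpen_ball.measurableSet (add_nonneg (hg t) (by positivity))
    (fun x hx => (hgδ hx).le) (fun x => hF0 ((t - x) / h)) hsupp
    ((integrable_of_bound_of_forall_notMem_Icc_eq_zero hFm hFM hFs).comp_div hh.ne'
      |>.comp_sub_left t)
    (.of_bound (hFm.comp (by fun_prop)).aestronglyMeasurable M (ae_of_all _ fun x => hFM _))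
  rw [integral_comp_sub_div_s8, abs_of_pos hh] at key
  set J := ∫ x, F ((t - x) / h) ∂volume.withDensity fun x => ENNReal.ofReal (g x)
  calc dist (J / h) (g t * I) = |J - g t * (h * I)| / h := by
        rw [Real.dist_eq, ← abs_of_pos hh, ← abs_div, abs_of_pos hh, sub_div]
        field_simp
    _ ≤ ε / (I + 1) * I := by
        rw [div_le_iff₀ hh]
        linarith
    _ < ε := by
        rw [div_mul_eq_mul_div, div_lt_iff₀ (by positivity)]
        nlinarith

theorem tendsto_integral_pow_comp_sub_div_withDensity {g : ℝ → ℝ} (hg : ∀ x, 0 ≤ g x)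
    [IsFiniteMeasure (volume.withDensity fun x => ENNReal.ofReal (g x))] {t : ℝ}
    (hgt : ContinuousAt g t) {K : ℝ → ℝ} (hKm : Measurable K)
    (hKs : ∀ u ∉ Icc (-1 : ℝ) 1, K u = 0) {M : ℝ} (hKM : ∀ u, |K u| ≤ M) {p : ℕ}
    (hp : Even p) (hp0 : p ≠ 0) :
    Tendsto
      (fun h => (∫ x, K ((t - x) / h) ^ p ∂volume.withDensity fun x => ENNReal.ofReal (g x)) / h)
      (𝓝[>] 0) (𝓝 (g t * ∫ u, K u ^ p)) :=
  tendsto_integral_comp_sub_div_withDensity hg hgt (hKm.pow_const p) (fun u => hp.pow_nonneg _)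
    (fun u hu => by simp [hKs u hu, hp0])
    (fun u => by rw [abs_pow]; exact pow_le_pow_left₀ (abs_nonneg _) (hKM u) p)

section Chebyshev

variable {Ω : Type*} [MeasurableSpace Ω] {μ : Measure Ω}

theorem tendsto_measure_abs_sub_ge_of_tendsto_variance [IsFiniteMeasure μ] {ι : Type*}
    {l : Filter ι} {T : ι → Ω → ℝ} {L : ℝ} (hT : ∀ i, MemLp (T i) 2 μ)
    (hmean : Tendsto (fun i => μ[T i]) l (𝓝 L)) (hvar : Tendsto (fun i => Var[T i; μ]) l (𝓝 0))
    {ε : ℝ} (hε : 0 < ε) :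
    Tendsto (fun i => (μ {ω | ε ≤ |T i ω - L|}).toReal) l (𝓝 0) := by
  refine squeeze_zero' (Eventually.of_forall fun _ => ENNReal.toReal_nonneg) ?_
    (by simpa using hvar.div_const ((ε / 2) ^ 2))
  filter_upwards [Metric.tendsto_nhds.mp hmean _ (half_pos hε)] with i hi
  have hsub : {ω | ε ≤ |T i ω - L|} ⊆ {ω | ε / 2 ≤ |T i ω - μ[T i]|} := fun ω (hω : ε ≤ _) => by
    rw [Real.dist_eq] at hi
    show ε / 2 ≤ |T i ω - μ[T i]|
    linarith [abs_sub_le (T i ω) (μ[T i]) L]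
  calc (μ {ω | ε ≤ |T i ω - L|}).toReal ≤ (μ {ω | ε / 2 ≤ |T i ω - μ[T i]|}).toReal :=
        ENNReal.toReal_mono (measure_ne_top _ _) (measure_mono hsub)
    _ ≤ Var[T i; μ] / (ε / 2) ^ 2 :=
        ENNReal.toReal_le_of_le_ofReal (div_nonneg (variance_nonneg _ _) (sq_nonneg _))
          (meas_ge_le_variance_div_sq (hT i) (half_pos hε))

end Chebyshev

section IdenticallyDistributed

variable {Ω β : Type*} [MeasurableSpace Ω] [MeasurableSpace β] {μ : Measure Ω} {X : ℕ → Ω → β}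
  {ν : Measure β} {φ : β → ℝ}

theorem integral_sum_comp_of_map_eq (hX : ∀ i, Measurable (X i)) (hXν : ∀ i, μ.map (X i) = ν)
    (hφm : Measurable φ) (hφ : Integrable φ ν) (n : ℕ) :
    ∫ ω, ∑ i ∈ range n, φ (X i ω) ∂μ = n * ∫ x, φ x ∂ν := by
  have hcomp : ∀ i, ∫ ω, φ (X i ω) ∂μ = ∫ x, φ x ∂ν := fun i => by
    rw [← hXν i, integral_map (hX i).aemeasurable hφm.aestronglyMeasurable]
  rw [integral_finsetSum _ fun i _ => ?_]
  · simp [hcomp]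
  · rw [← hXν i] at hφ
    exact hφ.comp_measurable (hX i)

theorem variance_sum_comp_le [IsProbabilityMeasure μ] (hX : ∀ i, Measurable (X i))
    (hind : iIndepFun X μ) (hXν : ∀ i, μ.map (X i) = ν) (hφm : Measurable φ) (hφ : MemLp φ 2 ν)
    (n : ℕ) :
    Var[fun ω => ∑ i ∈ range n, φ (X i ω); μ] ≤ n * ∫ x, φ x ^ 2 ∂ν := by
  have hmemLp : ∀ i, MemLp (φ ∘ X i) 2 μ := fun i =>
    (hXν i ▸ hφ).comp_of_map (hX i).aemeasurable
  have hvar : ∀ i, Var[φ ∘ X i; μ] ≤ ∫ x, φ x ^ 2 ∂ν := fun i => by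
    refine (variance_le_expectation_sq (hmemLp i).aestronglyMeasurable).trans_eq ?_
    rw [← hXν i, integral_map (hX i).aemeasurable (hφm.pow_const 2).aestronglyMeasurable]
    rfl
  have hsum : (fun ω => ∑ i ∈ range n, φ (X i ω)) = ∑ i ∈ range n, φ ∘ X i := by
    ext ω; simp
  rw [hsum, IndepFun.variance_sum (fun i _ => hmemLp i)
    fun i _ j _ hij => (hind.indepFun hij).comp hφm hφm]
  simpa using sum_le_sum fun i (_ : i ∈ range n) => hvar i

theorem tendsto_measure_abs_mul_sum_comp_sub_ge [IsProbabilityMeasure μ]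
    (hX : ∀ i, Measurable (X i)) (hind : iIndepFun X μ) (hXν : ∀ i, μ.map (X i) = ν)
    {φ : ℕ → β → ℝ} (hφm : ∀ n, Measurable (φ n)) (hφ : ∀ n, MemLp (φ n) 2 ν) {a : ℕ → ℝ}
    {L : ℝ} (hmean : Tendsto (fun n => a n * n * ∫ x, φ n x ∂ν) atTop (𝓝 L))
    (hvar : Tendsto (fun n => a n ^ 2 * n * ∫ x, φ n x ^ 2 ∂ν) atTop (𝓝 0)) {ε : ℝ}
    (hε : 0 < ε) :
    Tendsto (fun n => (μ {ω | ε ≤ |a n * ∑ i ∈ range n, φ n (X i ω) - L|}).toReal) atTop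
      (𝓝 0) := by
  have : IsProbabilityMeasure ν := hXν 0 ▸ Measure.isProbabilityMeasure_map (hX 0).aemeasurable
  refine tendsto_measure_abs_sub_ge_of_tendsto_variance
    (T := fun n ω => a n * ∑ i ∈ range n, φ n (X i ω)) (fun n => ?_) ?_ ?_ hε
  · refine MemLp.const_mul (memLp_finsetSum (range n) (f := fun i ω => φ n (X i ω))
      fun i _ => ?_) _
    exact (hXν i ▸ hφ n).comp_of_map (hX i).aemeasurable
  · refine hmean.congr fun n => ?_
    rw [integral_const_mul, integral_sum_comp_of_map_eq hX hXν (hφm n)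
      ((hφ n).integrable one_le_two), mul_assoc]
  · refine squeeze_zero (fun n => variance_nonneg _ _) (fun n => ?_) hvar
    rw [variance_const_mul, mul_assoc]
    gcongr
    exact variance_sum_comp_le hX hind hXν (hφm n) (hφ n) n

end IdenticallyDistributed

theorem kernel_squared_consistency_general
    {Ω : Type*} [MeasurableSpace Ω] (μ : Measure Ω) [IsProbabilityMeasure μ]
    (X : ℕ → Ω → ℝ) (hXmeas : ∀ i, Measurable (X i))
    (hXindep : iIndepFun X μ)
    (g : ℝ → ℝ) (hgpos : ∀ x, 0 ≤ g x)
    (hXdist : ∀ i, μ.map (X i) = volume.withDensity (fun x => ENNReal.ofReal (g x)))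
    (t : ℝ) (hgc : ContinuousAt g t)
    (K : ℝ → ℝ) (hKbdd : ∃ M, ∀ u, |K u| ≤ M)
    (hKmeas : Measurable K)
    (hKsupp : ∀ u, u ∉ Icc (-1 : ℝ) 1 → K u = 0)
    (h : ℕ → ℝ) (hhpos : ∀ n, 0 < h n)
    (hh0 : Tendsto h atTop (nhds 0))
    (hnh : Tendsto (fun n : ℕ => (n : ℝ) * h n) atTop atTop) :
    ∀ ε > 0,
      Tendsto
        (fun n : ℕ =>
          (μ {ω | ε ≤ |h n / (n : ℝ) * ∑ i ∈ Finset.range n,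
              ((1 / h n) * K ((t - X i ω) / h n)) ^ 2
              - g t * ∫ u, (K u) ^ 2|}).toReal)
        atTop (nhds 0) := by
  intro ε hε
  obtain ⟨M, hM⟩ := hKbdd
  have : IsProbabilityMeasure (volume.withDensity fun x => ENNReal.ofReal (g x)) :=
    hXdist 0 ▸ Measure.isProbabilityMeasure_map (hXmeas 0).aemeasurable
  have hh : Tendsto h atTop (𝓝[>] 0) := tendsto_nhdsWithin_iff.2 ⟨hh0, .of_forall hhpos⟩
  have hK (p : ℕ) (hp : Even p) (hp0 : p ≠ 0) :=
    (tendsto_integral_pow_comp_sub_div_withDensity hgpos hgc hKmeas hKsupp hM hp hp0).comp hh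
  have hφm (n : ℕ) : Measurable fun x => (1 / h n * K ((t - x) / h n)) ^ 2 := by fun_prop
  refine tendsto_measure_abs_mul_sum_comp_sub_ge hXmeas hXindep hXdist hφm
    (fun n => .of_bound (hφm n).aestronglyMeasurable ((|1 / h n| * M) ^ 2) (ae_of_all _ fun x => by
      rw [Real.norm_eq_abs, abs_pow, abs_mul]; gcongr; exact hM _)) ?_ ?_ hε
  · refine (hK 2 even_two two_ne_zero).congr' ?_
    filter_upwards [eventually_ne_atTop 0] with n hn
    simp only [Function.comp_apply, mul_pow, integral_const_mul]
    field_simp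
  · have h4 := (hK 4 (by decide) four_ne_zero).mul (tendsto_inv_atTop_zero.comp hnh)
    rw [mul_zero] at h4
    refine h4.congr' ?_
    filter_upwards [eventually_ne_atTop 0] with n hn
    simp only [Function.comp_apply, mul_pow, ← pow_mul, Nat.reduceMul, integral_const_mul]
    field_simp

/-- Under the same setup as Statement 7 (`Xᵢ` i.i.d. with density `g` on
`[0,1]`, `g` continuous at `t`, `K` bounded with support `[-1,1]`, `∫ K = 1`, `hₙ → 0`,
`n hₙ → ∞`), one has `(hₙ/n) Σ_{i<n} K_{hₙ}(t - Xᵢ)² → g(t) ∫ K(u)² du` in probability. -/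
theorem kernel_squared_consistency
    {Ω : Type*} [MeasurableSpace Ω] (μ : Measure Ω) [IsProbabilityMeasure μ]
    (X : ℕ → Ω → ℝ) (hXmeas : ∀ i, Measurable (X i))
    (hXindep : iIndepFun X μ)
    (g : ℝ → ℝ) (hgpos : ∀ x, 0 ≤ g x) (hgsupp : ∀ x, x ∉ Icc (0 : ℝ) 1 → g x = 0)
    (hXdist : ∀ i, μ.map (X i) = volume.withDensity (fun x => ENNReal.ofReal (g x)))
    (t : ℝ) (ht : t ∈ Ioo (0 : ℝ) 1) (hgc : ContinuousAt g t)
    (K : ℝ → ℝ) (hKbdd : ∃ M, ∀ u, |K u| ≤ M)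
    (hKmeas : Measurable K)
    (hKsupp : ∀ u, u ∉ Icc (-1 : ℝ) 1 → K u = 0) (hK1 : ∫ u, K u = 1)
    (h : ℕ → ℝ) (hhpos : ∀ n, 0 < h n)
    (hh0 : Tendsto h atTop (nhds 0))
    (hnh : Tendsto (fun n : ℕ => (n : ℝ) * h n) atTop atTop) :
    ∀ ε > 0,
      Tendsto
        (fun n : ℕ =>
          (μ {ω | ε ≤ |h n / (n : ℝ) * ∑ i ∈ Finset.range n,
              ((1 / h n) * K ((t - X i ω) / h n)) ^ 2
              - g t * ∫ u, (K u) ^ 2|}).toReal)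
        atTop (nhds 0) :=
  kernel_squared_consistency_general μ X hXmeas hXindep g hgpos hXdist t hgc K hKbdd hKmeas hKsupp h
    hhpos hh0 hnh
end

section
/- Let ψ : [a,b] → ℝ be Lipschitz with constant L, let f̂ and f₀ be nondecreasing on [a,b], and define ψ̄ on each interval [τᵢ, τᵢ₊₁) between consecutive jump points of the step function f̂ by ψ̄(u) = ψ(τᵢ) if f₀(u) > f̂(τᵢ) for all u in the interval, ψ̄(u) = ψ(s) if f₀(s) = f̂(s) for some s in the interval, and ψ̄(u) = ψ(τᵢ₊₁) if f₀(u) < f̂(τᵢ) for all u in the interval. Then, on each interval where f̂ is constant and f₀ crosses f̂ or stays on one side, |ψ̄(x) − ψ(x)| ≤ L·|x − x*| for a point x* with ψ̄(x) = ψ(x*) and sign consistency, and in particular if additionally f₀ is strictly increasing with derivative bounded below by m > 0 on [a,b], then |ψ̄(x) − ψ(x)| ≤ (L/m)·|f̂(x) − f₀(x)| for all x ∈ [a,b]. -/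
open Set

/-!
On the cell `[τᵢ, τᵢ₊₁)` containing `x`, `ψ̄ x = ψ p` for an anchor `p` (the left end, the
crossing point, or the right end) at which `f₀ p` lies between `fhat x` and `f₀ x`; at the right
end this uses continuity of `f₀`. Since `f₀` grows at rate at least `m`,
`m * |p - x| ≤ |f₀ p - f₀ x| ≤ |fhat x - f₀ x|`, and the Lipschitz bound on `ψ` finishes.
-/

theorem Fin.exists_mem_Ico_castSucc_succ {X : Type*} [LinearOrder X] {n : ℕ}
    (τ : Fin (n + 1) → X) {x : X} (hx : x ∈ Ico (τ 0) (τ (Fin.last n))) :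
    ∃ i : Fin n, x ∈ Ico (τ i.castSucc) (τ i.succ) := by
  induction n with
  | zero => simp at hx
  | succ n ih =>
    by_cases h : x < τ (Fin.last n).castSucc
    · obtain ⟨i, hi⟩ := ih (τ ∘ Fin.castSucc) ⟨hx.1, h⟩
      exact ⟨i.castSucc, hi⟩
    · exact ⟨Fin.last n, not_lt.1 h, hx.2⟩

theorem Convex.mul_sub_le_image_sub_of_le_hasDerivAt {D : Set ℝ} (hD : Convex ℝ D)
    {f f' : ℝ → ℝ} {C : ℝ} (hf : ∀ x ∈ D, HasDerivAt f (f' x) x) (hC : ∀ x ∈ D, C ≤ f' x) :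
    ∀ x ∈ D, ∀ y ∈ D, x ≤ y → C * (y - x) ≤ f y - f x :=
  hD.mul_sub_le_image_sub_of_le_deriv (fun x hx => (hf x hx).continuousAt.continuousWithinAt)
    (fun x hx => (hf x (interior_subset hx)).differentiableAt.differentiableWithinAt)
    (fun x hx => (hf x (interior_subset hx)).deriv ▸ hC x (interior_subset hx))

theorem abs_sub_le_div_mul_abs_of_mem_uIcc {D : Set ℝ} {ψ f : ℝ → ℝ} {L m v p x : ℝ}
    (hL : 0 ≤ L) (hm : 0 < m) (hψ : ∀ x ∈ D, ∀ y ∈ D, |ψ x - ψ y| ≤ L * |x - y|)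
    (hf : ∀ x ∈ D, ∀ y ∈ D, x ≤ y → m * (y - x) ≤ f y - f x)
    (hp : p ∈ D) (hx : x ∈ D) (hfp : f p ∈ uIcc v (f x)) :
    |ψ p - ψ x| ≤ L / m * |v - f x| := by
  have hgrow : m * |p - x| ≤ |f p - f x| := by
    rcases le_total p x with h | h
    · rw [abs_sub_comm p, abs_sub_comm (f p), abs_of_nonneg (sub_nonneg.2 h)]
      exact (hf p hp x hx h).trans (le_abs_self _)
    · rw [abs_of_nonneg (sub_nonneg.2 h)]
      exact (hf x hx p hp h).trans (le_abs_self _)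
  calc |ψ p - ψ x| ≤ L * |p - x| := hψ p hp x hx
    _ ≤ L * (|f p - f x| / m) := by gcongr; rwa [le_div_iff₀' hm]
    _ ≤ L * (|v - f x| / m) := by gcongr L * (?_ / m); exact abs_sub_left_of_mem_uIcc (uIcc_comm v _ ▸ hfp)
    _ = L / m * |v - f x| := by ring

theorem piecewise_constant_psi_bound_general
    (a b L m : ℝ) (hab : a < b) (hm : 0 < m)
    (ψ f₀ f₀' fhat ψbar : ℝ → ℝ)
    (hψ : ∀ x ∈ Icc a b, ∀ y ∈ Icc a b, |ψ x - ψ y| ≤ L * |x - y|)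
    (hf₀ : ∀ x ∈ Icc a b, HasDerivAt f₀ (f₀' x) x)
    (hf₀' : ∀ x ∈ Icc a b, m ≤ f₀' x)
    (k : ℕ) (τ : Fin (k + 2) → ℝ) (hτmono : StrictMono τ)
    (hτ0 : τ 0 = a) (hτlast : τ (Fin.last (k + 1)) = b)
    (hfhatconst : ∀ i : Fin (k + 1), ∀ x ∈ Ico (τ i.castSucc) (τ i.succ),
        fhat x = fhat (τ i.castSucc))
    (hψbar : ∀ i : Fin (k + 1),
        ((∀ x ∈ Ico (τ i.castSucc) (τ i.succ), fhat (τ i.castSucc) < f₀ x) ∧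
          (∀ x ∈ Ico (τ i.castSucc) (τ i.succ), ψbar x = ψ (τ i.castSucc))) ∨
        (∃ s ∈ Ico (τ i.castSucc) (τ i.succ), f₀ s = fhat s ∧
          (∀ x ∈ Ico (τ i.castSucc) (τ i.succ), ψbar x = ψ s)) ∨
        ((∀ x ∈ Ico (τ i.castSucc) (τ i.succ), f₀ x < fhat (τ i.castSucc)) ∧
          (∀ x ∈ Ico (τ i.castSucc) (τ i.succ), ψbar x = ψ (τ i.succ)))) :
    ∀ x ∈ Ico a b, |ψbar x - ψ x| ≤ L / m * |fhat x - f₀ x| := by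
  intro x hx
  have hxab : x ∈ Icc a b := Ico_subset_Icc_self hx
  have hL : 0 ≤ L := nonneg_of_mul_nonneg_left ((abs_nonneg _).trans (hψ a (left_mem_Icc.2 hab.le)
    b (right_mem_Icc.2 hab.le))) (abs_pos.2 (sub_ne_zero.2 hab.ne))
  have hτ (j : Fin (k + 2)) : τ j ∈ Icc a b :=
    ⟨hτ0 ▸ hτmono.monotone (Fin.zero_le j), hτlast ▸ hτmono.monotone (Fin.le_last j)⟩
  have hgrow := (convex_Icc a b).mul_sub_le_image_sub_of_le_hasDerivAt hf₀ hf₀'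
  have hmono : MonotoneOn f₀ (Icc a b) := fun y hy z hz hyz =>
    sub_nonneg.1 ((mul_nonneg hm.le (sub_nonneg.2 hyz)).trans (hgrow y hy z hz hyz))
  have key {p : ℝ} (hp : p ∈ Icc a b) (hfp : f₀ p ∈ uIcc (fhat x) (f₀ x)) :
      |ψ p - ψ x| ≤ L / m * |fhat x - f₀ x| :=
    abs_sub_le_div_mul_abs_of_mem_uIcc hL hm hψ hgrow hp hxab hfp
  obtain ⟨i, hxi⟩ := Fin.exists_mem_Ico_castSucc_succ τ (hτ0 ▸ hτlast ▸ hx)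
  have hv : fhat x = fhat (τ i.castSucc) := hfhatconst i x hxi
  rcases hψbar i with ⟨hgt, hψbar⟩ | ⟨s, hs, hfs, hψbar⟩ | ⟨hlt, hψbar⟩
  · rw [hψbar x hxi]
    refine key (hτ _) (mem_uIcc_of_le ?_ (hmono (hτ _) hxab hxi.1))
    exact hv ▸ (hgt _ ⟨le_rfl, hxi.1.trans_lt hxi.2⟩).le
  · rw [hψbar x hxi]
    refine key ⟨(hτ _).1.trans hs.1, hs.2.le.trans (hτ _).2⟩ ?_
    rw [hfs, hfhatconst i s hs, ← hv]
    exact left_mem_uIcc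
  · rw [hψbar x hxi]
    have hright : f₀ (τ i.succ) ≤ fhat x :=
      ContinuousWithinAt.closure_le (s := Ico (τ i.castSucc) (τ i.succ))
        (closure_Ico (hxi.1.trans_lt hxi.2).ne ▸ right_mem_Icc.2 (hxi.1.trans hxi.2.le))
        (hf₀ _ (hτ _)).continuousAt.continuousWithinAt continuousWithinAt_const
        (fun y hy => hv ▸ (hlt y hy).le)
    exact key (hτ _) (mem_uIcc_of_ge (hmono hxab (hτ _) hxi.2.le) hright)

/-- Let `ψ` be `L`-Lipschitz on `[a,b]`, `f₀` be `C¹` with `f₀' ≥ m > 0`,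
and `fhat` a nondecreasing step function with jump points `a = τ₀ < τ₁ < ... < τ_{k+1} = b`,
constant on each interval `[τᵢ, τᵢ₊₁)`. Let `ψ̄` be the piecewise-constant version of `ψ`:
on `[τᵢ, τᵢ₊₁)`, `ψ̄ ≡ ψ(τᵢ)` if `f₀ > fhat` throughout, `ψ̄ ≡ ψ(s)` if `f₀(s) = fhat(s)` for
some `s` in the interval, and `ψ̄ ≡ ψ(τᵢ₊₁)` if `f₀ < fhat` throughout. Then
`|ψ̄(x) − ψ(x)| ≤ (L/m)|fhat(x) − f₀(x)|` on `[a,b)`. -/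
theorem piecewise_constant_psi_bound
    (a b L m : ℝ) (hab : a < b) (hm : 0 < m)
    (ψ f₀ f₀' fhat ψbar : ℝ → ℝ)
    (hψ : ∀ x ∈ Icc a b, ∀ y ∈ Icc a b, |ψ x - ψ y| ≤ L * |x - y|)
    (hf₀ : ∀ x ∈ Icc a b, HasDerivAt f₀ (f₀' x) x)
    (hf₀' : ∀ x ∈ Icc a b, m ≤ f₀' x)
    (hfhatmono : MonotoneOn fhat (Icc a b))
    (k : ℕ) (τ : Fin (k + 2) → ℝ) (hτmono : StrictMono τ)
    (hτ0 : τ 0 = a) (hτlast : τ (Fin.last (k + 1)) = b)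
    (hfhatconst : ∀ i : Fin (k + 1), ∀ x ∈ Ico (τ i.castSucc) (τ i.succ),
        fhat x = fhat (τ i.castSucc))
    (hψbar : ∀ i : Fin (k + 1),
        ((∀ x ∈ Ico (τ i.castSucc) (τ i.succ), fhat (τ i.castSucc) < f₀ x) ∧
          (∀ x ∈ Ico (τ i.castSucc) (τ i.succ), ψbar x = ψ (τ i.castSucc))) ∨
        (∃ s ∈ Ico (τ i.castSucc) (τ i.succ), f₀ s = fhat s ∧
          (∀ x ∈ Ico (τ i.castSucc) (τ i.succ), ψbar x = ψ s)) ∨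
        ((∀ x ∈ Ico (τ i.castSucc) (τ i.succ), f₀ x < fhat (τ i.castSucc)) ∧
          (∀ x ∈ Ico (τ i.castSucc) (τ i.succ), ψbar x = ψ (τ i.succ)))) :
    ∀ x ∈ Ico a b, |ψbar x - ψ x| ≤ L / m * |fhat x - f₀ x| :=
  piecewise_constant_psi_bound_general a b L m hab hm ψ f₀ f₀' fhat ψbar hψ hf₀ hf₀' k τ hτmono hτ0
    hτlast hfhatconst hψbar
end

section
/- The isotonic least squares estimator equals the left slope of the greatest convex minorant of the cusum diagram: if Ĉ is the greatest convex minorant of the points (0,0), (i, Σ_{j≤i}Y_j) for i = 1,...,n, then the minimizer (f₁ ≤ ... ≤ fₙ) of Σᵢ(Yᵢ − fᵢ)² over nondecreasing vectors satisfies fᵢ = left-derivative of Ĉ at i. -/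
/-!
First-order optimality of `f̂` against the monotone perturbations `f̂ + ε·1_{[k,n)}`, and against
`f̂ - ε·1_{[k,n)}` when `f̂` jumps at `k`, shows that the cumulative sums `T` of `f̂` satisfy
`T k ≤ S k` for `k ≤ n`, with equality at `0`, at `n` and at every jump of `f̂`. So the piecewise
linear interpolation of `T` is a convex minorant of the cusum diagram, and between two consecutive
touching points it is the chord of that diagram, hence lies above every convex minorant there.
It is therefore the greatest convex minorant, and its left slope at `i + 1` is `f̂ i`.
-/

open Set Finset Filter Topology

theorem ConvexOn.le_line_of_le_of_le {s : Set ℝ} {c : ℝ → ℝ} (hc : ConvexOn ℝ s c)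
    {a b x p q : ℝ} (ha : a ∈ s) (hb : b ∈ s) (hx : x ∈ Icc a b) (hca : c a ≤ p)
    (hcb : c b ≤ p + (b - a) * q) : c x ≤ p + (x - a) * q := by
  rcases hx.1.eq_or_lt with rfl | hax
  · simpa using hca
  rcases hx.2.eq_or_lt with rfl | hxb
  · exact hcb
  refine le_of_mul_le_mul_left ?_ (sub_pos.2 (hax.trans hxb))
  calc (b - a) * c x ≤ (b - x) * c a + (x - a) * c b := hc.secant_mono_aux1 ha hb hax hxb
    _ ≤ (b - x) * p + (x - a) * (p + (b - a) * q) :=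
      add_le_add (mul_le_mul_of_nonneg_left hca (by linarith))
        (mul_le_mul_of_nonneg_left hcb (by linarith))
    _ = (b - a) * (p + (x - a) * q) := by ring

theorem exists_monotone_nat_extension {β : Type*} [Preorder β] {n : ℕ} (hn : 0 < n)
    {f : Fin n → β} (hf : Monotone f) : ∃ g : ℕ → β, Monotone g ∧ ∀ i : Fin n, g i = f i :=
  ⟨fun j => f ⟨min j (n - 1), by omega⟩, fun a b hab => hf (by simp only [Fin.mk_le_mk]; omega),
    fun i => congrArg f (Fin.ext (by simp only; omega))⟩

namespace IsotonicRegression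

section FirstOrder

variable {ι : Type*} [Fintype ι]

theorem sum_mul_nonpos_of_forall_sum_sq_le (y f h : ι → ℝ) {ε₀ : ℝ} (hε₀ : 0 < ε₀)
    (hmin : ∀ ε, 0 < ε → ε < ε₀ →
      ∑ i, (y i - f i) ^ 2 ≤ ∑ i, (y i - (f i + ε * h i)) ^ 2) :
    ∑ i, (y i - f i) * h i ≤ 0 := by
  set A := ∑ i, (y i - f i) * h i
  set B := ∑ i, h i ^ 2
  have hexpand : ∀ ε : ℝ, ∑ i, (y i - (f i + ε * h i)) ^ 2
      = ∑ i, (y i - f i) ^ 2 - ε * (2 * A - ε * B) := fun ε => by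
    simp only [A, B, mul_sum, ← sum_sub_distrib]
    exact sum_congr rfl fun i _ => by ring
  have hsmall : ∀ᶠ ε in 𝓝[>] (0 : ℝ), 2 * A ≤ ε * B := by
    filter_upwards [Ioo_mem_nhdsGT hε₀] with ε hε
    have := hmin ε hε.1 hε.2
    rw [hexpand] at this
    nlinarith [hε.1]
  have hlim : Tendsto (fun ε : ℝ => ε * B) (𝓝[>] 0) (𝓝 0) := by
    simpa using ((tendsto_id (x := 𝓝 (0 : ℝ))).mul_const B).mono_left nhdsWithin_le_nhds
  linarith [ge_of_tendsto hlim hsmall]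

end FirstOrder

section Isotonic

variable {n : ℕ}

def IsIsotonicLSE (Y : ℕ → ℝ) (f : Fin n → ℝ) : Prop :=
  Monotone f ∧
    ∀ g : Fin n → ℝ, Monotone g → ∑ i : Fin n, (Y i - f i) ^ 2 ≤ ∑ i : Fin n, (Y i - g i) ^ 2

def upIndicator (k : ℕ) (i : Fin n) : ℝ := if k ≤ (i : ℕ) then 1 else 0

theorem monotone_upIndicator (k : ℕ) : Monotone (upIndicator (n := n) k) := by
  intro i j hij
  have : (i : ℕ) ≤ j := hij
  unfold upIndicator
  split_ifs <;> first | omega | norm_num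

theorem sum_mul_upIndicator (D : ℕ → ℝ) (k : ℕ) :
    ∑ i : Fin n, D i * upIndicator k i = ∑ j ∈ Ico k n, D j := by
  simp only [upIndicator, mul_ite, mul_one, mul_zero]
  rw [Fin.sum_univ_eq_sum_range (fun j => if k ≤ j then D j else 0), ← sum_filter, range_eq_Ico,
    Ico_filter_le, max_eq_right k.zero_le]

variable {Y : ℕ → ℝ} {f : Fin n → ℝ}

theorem IsIsotonicLSE.sum_residual_mul_nonpos (hf : IsIsotonicLSE Y f) {h : Fin n → ℝ} {ε₀ : ℝ}
    (hε₀ : 0 < ε₀) (hfeas : ∀ ε, 0 < ε → ε < ε₀ → Monotone fun i => f i + ε * h i) :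
    ∑ i : Fin n, (Y i - f i) * h i ≤ 0 :=
  sum_mul_nonpos_of_forall_sum_sq_le _ f h hε₀ fun ε h₁ h₂ => hf.2 _ (hfeas ε h₁ h₂)

theorem IsIsotonicLSE.sum_residual_mul_upIndicator_nonpos (hf : IsIsotonicLSE Y f) (k : ℕ) :
    ∑ i : Fin n, (Y i - f i) * upIndicator k i ≤ 0 :=
  hf.sum_residual_mul_nonpos one_pos fun _ hε _ =>
    hf.1.add ((monotone_upIndicator k).const_mul hε.le)

theorem IsIsotonicLSE.sum_residual_eq_zero (hf : IsIsotonicLSE Y f) :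
    ∑ i : Fin n, (Y i - f i) = 0 := by
  have h₁ := hf.sum_residual_mul_nonpos (h := fun _ => 1) one_pos fun _ _ _ => hf.1.add_const _
  have h₂ := hf.sum_residual_mul_nonpos (h := fun _ => -1) one_pos fun _ _ _ => hf.1.add_const _
  simp only [mul_one, mul_neg, sum_neg_distrib] at h₁ h₂
  linarith

theorem IsIsotonicLSE.sum_residual_mul_upIndicator_nonneg (hf : IsIsotonicLSE Y f) {k : ℕ}
    {δ : ℝ} (hδ : 0 < δ) (hgap : ∀ i j : Fin n, (i : ℕ) < k → k ≤ (j : ℕ) → f i + δ ≤ f j) :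
    0 ≤ ∑ i : Fin n, (Y i - f i) * upIndicator k i := by
  have := hf.sum_residual_mul_nonpos (h := fun i => -upIndicator k i) hδ fun ε _ hε i j hij => by
    have hfij := hf.1 hij
    unfold upIndicator
    by_cases hj : k ≤ (j : ℕ)
    · by_cases hi : k ≤ (i : ℕ)
      · simp only [if_pos hi, if_pos hj]
        linarith
      · simp only [if_neg hi, if_pos hj]
        linarith [hgap i j (not_le.1 hi) hj]
    · have hi : ¬k ≤ (i : ℕ) := fun hi => hj (hi.trans hij)
      simp only [if_neg hi, if_neg hj]
      linarith
  simpa only [mul_neg, sum_neg_distrib, neg_nonpos] using this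

end Isotonic

section Interpolation

variable (g : ℕ → ℝ)

def cusum (k : ℕ) : ℝ := ∑ j ∈ range k, g j

def piece (k : ℕ) (x : ℝ) : ℝ := cusum g k + (x - k) * g k

/-- For monotone `g` this maximum of the affine pieces is the piecewise linear interpolation of the
points `(k, cusum g k)`, `k ≤ n + 1`; writing it as a maximum makes it convex for free. -/
noncomputable def interp (n : ℕ) : ℝ → ℝ := (range (n + 1)).sup' nonempty_range_add_one (piece g)

theorem piece_natCast (k : ℕ) : piece g k k = cusum g k := by
  simp [piece]

theorem piece_add_one_sub_piece (k : ℕ) (x : ℝ) :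
    piece g (k + 1) x - piece g k x = (x - (k + 1)) * (g (k + 1) - g k) := by
  simp only [piece, cusum, sum_range_succ]
  push_cast
  ring

theorem hasDerivAt_piece (k : ℕ) (x : ℝ) : HasDerivAt (piece g k) (g k) x := by
  have h := (((hasDerivAt_id x).sub_const (k : ℝ)).mul_const (g k)).const_add (cusum g k)
  rwa [one_mul] at h

theorem convexOn_piece (k : ℕ) : ConvexOn ℝ univ (piece g k) := by
  refine ⟨convex_univ, fun x _ y _ a b _ _ hab => le_of_eq ?_⟩
  simp only [piece, smul_eq_mul]
  linear_combination (k * g k - cusum g k) * hab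

theorem convexOn_interp (n : ℕ) : ConvexOn ℝ univ (interp g n) :=
  sup'_induction _ _ (fun _ h₁ _ h₂ => h₁.sup h₂) fun k _ => convexOn_piece g k

variable {g}

theorem piece_le_piece_of_le (hg : Monotone g) {k m : ℕ} (hkm : k ≤ m) {x : ℝ} (hx : m ≤ x) :
    piece g k x ≤ piece g m x := by
  induction m, hkm using Nat.le_induction with
  | base => exact le_rfl
  | succ m _ ih =>
    have hstep : 0 ≤ (x - (m + 1)) * (g (m + 1) - g m) :=
      mul_nonneg (by push_cast at hx; linarith) (sub_nonneg.2 (hg m.le_succ))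
    linarith [ih (le_trans (by simp) hx), piece_add_one_sub_piece g m x]

theorem piece_le_piece_of_ge (hg : Monotone g) {k m : ℕ} (hmk : m ≤ k) {x : ℝ}
    (hx : x ≤ m + 1) : piece g k x ≤ piece g m x := by
  induction k, hmk using Nat.le_induction with
  | base => exact le_rfl
  | succ k hmk ih =>
    have hmk' : (m : ℝ) ≤ k := by exact_mod_cast hmk
    have hstep : (x - (k + 1)) * (g (k + 1) - g k) ≤ 0 :=
      mul_nonpos_of_nonpos_of_nonneg (by linarith) (sub_nonneg.2 (hg k.le_succ))
    linarith [piece_add_one_sub_piece g k x]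

theorem interp_eq_piece (hg : Monotone g) {m n : ℕ} (hm : m ≤ n) {x : ℝ}
    (hx : x ∈ Icc (m : ℝ) (m + 1)) : interp g n x = piece g m x := by
  rw [interp, Finset.sup'_apply]
  refine le_antisymm (sup'_le _ _ fun k _ => ?_) (le_sup' (piece g · x) (mem_range.2 (by omega)))
  rcases le_total k m with hkm | hmk
  · exact piece_le_piece_of_le hg hkm hx.1
  · exact piece_le_piece_of_ge hg hmk hx.2

theorem interp_natCast (hg : Monotone g) {k n : ℕ} (hk : k ≤ n) : interp g n k = cusum g k := by
  rw [interp_eq_piece hg hk ⟨le_rfl, by linarith⟩, piece_natCast]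

theorem cusum_eq_piece_of_forall_eq {a k : ℕ} (hak : a ≤ k) (h : ∀ j ∈ Set.Ico a k, g j = g a) :
    cusum g k = piece g a k := by
  induction k, hak using Nat.le_induction with
  | base => exact (piece_natCast g a).symm
  | succ k hak ih =>
    rw [cusum, sum_range_succ, ← cusum, ih fun j hj => h j ⟨hj.1, hj.2.trans k.lt_succ_self⟩,
      h k ⟨hak, k.lt_succ_self⟩]
    simp only [piece]
    push_cast
    ring

theorem piece_eq_of_forall_eq {a k : ℕ} (hak : a ≤ k) (h : ∀ j ∈ Set.Icc a k, g j = g a) :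
    piece g k = piece g a := by
  funext x
  rw [piece, cusum_eq_piece_of_forall_eq hak fun j hj => h j ⟨hj.1, hj.2.le⟩,
    h k ⟨hak, le_rfl⟩]
  simp only [piece]
  ring

end Interpolation

theorem exists_const_run_around {α : Type*} (g : ℕ → α) (P : ℕ → Prop) {n m : ℕ} (h0 : P 0)
    (hn : P n) (hjump : ∀ j, j + 1 < n → g j ≠ g (j + 1) → P (j + 1)) (hm : m < n) :
    ∃ a b, a ≤ m ∧ m < b ∧ b ≤ n ∧ P a ∧ P b ∧ ∀ j ∈ Set.Ico a b, g j = g a := by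
  classical
  have hb : ∃ b, m < b ∧ b ≤ n ∧ P b := ⟨n, hm, le_rfl, hn⟩
  obtain ⟨hmb, hbn, hPb⟩ := Nat.find_spec hb
  refine ⟨Nat.findGreatest P m, Nat.find hb, Nat.findGreatest_le m, hmb, hbn,
    Nat.findGreatest_spec m.zero_le h0, hPb, fun j hj => ?_⟩
  obtain ⟨haj, hjb⟩ := hj
  induction j, haj using Nat.le_induction with
  | base => rfl
  | succ j haj ih =>
    rw [← ih (by omega)]
    by_contra hne
    have hP := hjump j (by omega) (Ne.symm hne)
    rcases le_or_gt (j + 1) m with hjm | hjm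
    · have := Nat.le_findGreatest hjm hP
      omega
    · have := Nat.find_min' hb ⟨hjm, by omega, hP⟩
      omega

section Minorant

variable {g S : ℕ → ℝ} {n : ℕ}

theorem le_interp_of_convexOn (hg : Monotone g) (h0 : S 0 = cusum g 0) (hn : S n = cusum g n)
    (hjump : ∀ j, j + 1 < n → g j < g (j + 1) → S (j + 1) = cusum g (j + 1))
    {c : ℝ → ℝ} (hc : ConvexOn ℝ (Icc 0 (n : ℝ)) c) (hcS : ∀ k ≤ n, c k ≤ S k)
    {x : ℝ} (hx : x ∈ Icc 0 (n : ℝ)) : c x ≤ interp g n x := by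
  rcases hx.2.eq_or_lt with rfl | hxn
  · rw [interp_natCast hg le_rfl, ← hn]
    exact hcS n le_rfl
  set m := ⌊x⌋₊
  have hm : m < n := (Nat.floor_lt hx.1).2 hxn
  have hxm : x ∈ Icc (m : ℝ) (m + 1) := ⟨Nat.floor_le hx.1, (Nat.lt_floor_add_one x).le⟩
  -- On the run `[a, b]` of touching points around `x`, `interp` is the chord of `S` from `a` to `b`.
  obtain ⟨a, b, ham, hmb, hbn, ha, hb, hconst⟩ :=
    exists_const_run_around g (fun k => S k = cusum g k) h0 hn
      (fun j hj hne => hjump j hj ((hg j.le_succ).lt_of_ne hne)) hm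
  have hmem : ∀ k ≤ n, (k : ℝ) ∈ Icc 0 (n : ℝ) := fun k hk => ⟨k.cast_nonneg, Nat.cast_le.2 hk⟩
  have hca : c a ≤ cusum g a := (hcS a (by omega)).trans_eq ha
  have hcb : c b ≤ cusum g a + (b - a) * g a :=
    (hcS b hbn).trans_eq (hb.trans (cusum_eq_piece_of_forall_eq (by omega) hconst))
  have hxab : x ∈ Icc (a : ℝ) b :=
    ⟨(Nat.cast_le.2 ham).trans hxm.1, hxm.2.trans (by exact_mod_cast Nat.succ_le_of_lt hmb)⟩
  calc c x ≤ piece g a x := hc.le_line_of_le_of_le (hmem a (by omega)) (hmem b hbn) hxab hca hcb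
    _ = piece g m x := by
      rw [piece_eq_of_forall_eq ham fun j hj => hconst j ⟨hj.1, by have := hj.2; omega⟩]
    _ = interp g n x := (interp_eq_piece hg hm.le hxm).symm

theorem isGreatest_interp (hg : Monotone g) (hle : ∀ k ≤ n, cusum g k ≤ S k)
    (h0 : S 0 = cusum g 0) (hn : S n = cusum g n)
    (hjump : ∀ j, j + 1 < n → g j < g (j + 1) → S (j + 1) = cusum g (j + 1))
    {x : ℝ} (hx : x ∈ Icc 0 (n : ℝ)) :
    IsGreatest {y | ∃ c : ℝ → ℝ, ConvexOn ℝ (Icc 0 (n : ℝ)) c ∧ (∀ k ≤ n, c k ≤ S k) ∧ y = c x}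
      (interp g n x) :=
  ⟨⟨interp g n, (convexOn_interp g n).subset (subset_univ _) (convex_Icc _ _),
      fun k hk => (interp_natCast hg hk).trans_le (hle k hk), rfl⟩,
    by rintro _ ⟨c, hc, hcS, rfl⟩; exact le_interp_of_convexOn hg h0 hn hjump hc hcS hx⟩

theorem derivWithin_Iio_eq_of_eqOn_interp (hg : Monotone g) {C : ℝ → ℝ}
    (hC : EqOn C (interp g n) (Icc 0 (n : ℝ))) {i : ℕ} (hi : i < n) :
    derivWithin C (Iio ((i : ℝ) + 1)) ((i : ℝ) + 1) = g i := by
  have hi' : (i : ℝ) + 1 ≤ n := by exact_mod_cast hi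
  have hCpiece : ∀ x ∈ Icc (i : ℝ) (i + 1), C x = piece g i x := fun x hx =>
    (hC ⟨i.cast_nonneg.trans hx.1, hx.2.trans hi'⟩).trans (interp_eq_piece hg hi.le hx)
  rw [Filter.EventuallyEq.derivWithin_eq (f := piece g i) ?_ (hCpiece _ ⟨by linarith, le_rfl⟩)]
  · exact (hasDerivAt_piece g i _).hasDerivWithinAt.derivWithin (uniqueDiffWithinAt_Iio _)
  · filter_upwards [Ioo_mem_nhdsLT (lt_add_one (i : ℝ))] with x hx
    exact hCpiece x (Ioo_subset_Icc_self hx)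

end Minorant

section IsotonicCusum

variable {n : ℕ} {Y : ℕ → ℝ} {f : Fin n → ℝ} {g : ℕ → ℝ}

theorem IsIsotonicLSE.cusum_sub_cusum_eq (hf : IsIsotonicLSE Y f) (hgf : ∀ i : Fin n, g i = f i)
    {k : ℕ} (hk : k ≤ n) :
    cusum Y k - cusum g k = -∑ i : Fin n, (Y i - f i) * upIndicator k i := by
  have h := hf.sum_residual_eq_zero
  simp only [← hgf] at h ⊢
  rw [sum_mul_upIndicator (fun j => Y j - g j), sum_Ico_eq_sub _ hk]
  rw [Fin.sum_univ_eq_sum_range (fun j => Y j - g j)] at h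
  simp only [cusum, sum_sub_distrib] at h ⊢
  linarith

theorem IsIsotonicLSE.cusum_le (hf : IsIsotonicLSE Y f) (hgf : ∀ i : Fin n, g i = f i)
    {k : ℕ} (hk : k ≤ n) : cusum g k ≤ cusum Y k := by
  linarith [hf.cusum_sub_cusum_eq hgf hk, hf.sum_residual_mul_upIndicator_nonpos k]

theorem IsIsotonicLSE.cusum_eq_at_length (hf : IsIsotonicLSE Y f) (hgf : ∀ i : Fin n, g i = f i) :
    cusum Y n = cusum g n := by
  have h := hf.cusum_sub_cusum_eq hgf le_rfl
  have hzero : ∀ i : Fin n, upIndicator n i = 0 := fun i => if_neg (not_le.2 i.isLt)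
  simp only [hzero, mul_zero, sum_const_zero, neg_zero] at h
  exact sub_eq_zero.1 h

theorem IsIsotonicLSE.cusum_eq_of_lt (hf : IsIsotonicLSE Y f) (hg : Monotone g)
    (hgf : ∀ i : Fin n, g i = f i) {j : ℕ} (hj : j + 1 < n) (hlt : g j < g (j + 1)) :
    cusum Y (j + 1) = cusum g (j + 1) := by
  have hgap : ∀ i i' : Fin n, (i : ℕ) < j + 1 → j + 1 ≤ (i' : ℕ) →
      f i + (g (j + 1) - g j) ≤ f i' := fun i i' hi hi' => by
    rw [← hgf, ← hgf]
    linarith [hg (Nat.lt_succ_iff.1 hi), hg hi']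
  linarith [hf.cusum_sub_cusum_eq hgf hj.le, hf.cusum_le hgf hj.le,
    hf.sum_residual_mul_upIndicator_nonneg (sub_pos.2 hlt) hgap]

end IsotonicCusum

end IsotonicRegression

open IsotonicRegression

theorem isotonic_lse_is_gcm_slope_general
    (n : ℕ) (Y : ℕ → ℝ)
    (S : ℕ → ℝ) (hS : ∀ k, S k = ∑ j ∈ Finset.range k, Y j)
    (C : ℝ → ℝ)
    (hC : ∀ x ∈ Icc (0 : ℝ) n, C x =
        sSup {y | ∃ c : ℝ → ℝ, ConvexOn ℝ (Icc (0 : ℝ) n) c ∧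
          (∀ k ≤ n, c k ≤ S k) ∧ y = c x})
    (fhat : Fin n → ℝ) (hmono : Monotone fhat)
    (hmin : ∀ g : Fin n → ℝ, Monotone g →
        ∑ i : Fin n, (Y i.val - fhat i) ^ 2 ≤ ∑ i : Fin n, (Y i.val - g i) ^ 2) :
    ∀ i : Fin n, fhat i = derivWithin C (Iio ((i : ℝ) + 1)) ((i : ℝ) + 1) := by
  intro i
  obtain ⟨g, hg, hgf⟩ := exists_monotone_nat_extension i.pos hmono
  have hf : IsIsotonicLSE Y fhat := ⟨hmono, hmin⟩
  obtain rfl : S = cusum Y := funext hS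
  have hCg : EqOn C (interp g n) (Icc 0 n) := fun x hx =>
    (hC x hx).trans (isGreatest_interp hg (fun _ hk => hf.cusum_le hgf hk) (by simp [cusum])
      (hf.cusum_eq_at_length hgf) (fun _ hj hlt => hf.cusum_eq_of_lt hg hgf hj hlt) hx).csSup_eq
  rw [← hgf i]
  exact (derivWithin_Iio_eq_of_eqOn_interp hg hCg i.isLt).symm

/-- The isotonic least squares estimator equals the left slope of the
greatest convex minorant of the cusum diagram: with `S₀ = 0`, `Sᵢ = Σ_{j<i} Yⱼ`, and `C`
the greatest convex minorant on `[0,n]` of the points `(i, Sᵢ)`, the minimizer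
`(f₁ ≤ ... ≤ fₙ)` of `Σᵢ (Yᵢ − fᵢ)²` satisfies `fᵢ = ` left derivative of `C` at `i`. -/
theorem isotonic_lse_is_gcm_slope
    (n : ℕ) (hn : 0 < n) (Y : ℕ → ℝ)
    (S : ℕ → ℝ) (hS : ∀ k, S k = ∑ j ∈ Finset.range k, Y j)
    (C : ℝ → ℝ)
    (hC : ∀ x ∈ Icc (0 : ℝ) n, C x =
        sSup {y | ∃ c : ℝ → ℝ, ConvexOn ℝ (Icc (0 : ℝ) n) c ∧
          (∀ k ≤ n, c k ≤ S k) ∧ y = c x})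
    (fhat : Fin n → ℝ) (hmono : Monotone fhat)
    (hmin : ∀ g : Fin n → ℝ, Monotone g →
        ∑ i : Fin n, (Y i.val - fhat i) ^ 2 ≤ ∑ i : Fin n, (Y i.val - g i) ^ 2) :
    ∀ i : Fin n, fhat i = derivWithin C (Iio ((i : ℝ) + 1)) ((i : ℝ) + 1) :=
  isotonic_lse_is_gcm_slope_general n Y S hS C hC fhat hmono hmin
end
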